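/- Let Δ be an irreducible simply-laced root system with simple roots {α_i}_{i∈I}, Cartan matrix (a_ij), Coxeter number h, and longest Weyl group element w₀. Define the involution i ↦ ī of I by w₀(α_i) = −α_ī. Suppose o : I → {±1} satisfies o_i·o_j = −1 whenever a_ij < 0. Then o_i·o_ī = (−1)^h for every i ∈ I. -/

import Mathlib

open scoped InnerProductSpace Classical

structure RootSystemData (V : Type*) [NormedAddCommGroup V] [InnerProductSpace ℝ V]
    (I : Type*) [Fintype I] : Type _ where
  roots : Finset V
  simple : I → V
  simple_mem : ∀ i, simple i ∈ roots
  zero_notMem : (0 : V) ∉ roots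
  neg_mem : ∀ α ∈ roots, -α ∈ roots
  reflect_mem : ∀ α ∈ roots, ∀ β ∈ roots, β - (2 * ⟪β, α⟫_ℝ / ⟪α, α⟫_ℝ) • α ∈ roots
  pairing_int : ∀ α ∈ roots, ∀ β ∈ roots, ∃ n : ℤ, 2 * ⟪β, α⟫_ℝ / ⟪α, α⟫_ℝ = (n : ℝ)
  indep : LinearIndependent ℝ simple
  span_eq : Submodule.span ℝ (Set.range simple) = ⊤
  pos_or_neg : ∀ α ∈ roots,
    (∃ c : I → ℕ, α = ∑ i, (c i : ℝ) • simple i) ∨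
    (∃ c : I → ℕ, α = -(∑ i, (c i : ℝ) • simple i))

namespace RootSystemData

variable {V : Type*} [NormedAddCommGroup V] [InnerProductSpace ℝ V]
  {I : Type*} [Fintype I]

noncomputable def posRoots (R : RootSystemData V I) : Finset V :=
  R.roots.filter fun α => ∃ c : I → ℕ, α = ∑ i, (c i : ℝ) • R.simple i

noncomputable def negRoots (R : RootSystemData V I) : Finset V :=
  R.posRoots.image fun α => -α

def IsSimplyLaced (R : RootSystemData V I) : Prop :=
  ∀ α ∈ R.roots, ⟪α, α⟫_ℝ = 2

def IsIrreducible (R : RootSystemData V I) : Prop :=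
  ∀ S : Set I, (∀ i ∈ S, ∀ j ∉ S, ⟪R.simple i, R.simple j⟫_ℝ = 0) → S = ∅ ∨ S = Set.univ

def HasCoxeterNumber (R : RootSystemData V I) (h : ℕ) : Prop :=
  R.roots.card = h * Fintype.card I

def IsFundamental (R : RootSystemData V I) (fw : I → V) : Prop :=
  ∀ i j, ⟪fw i, R.simple j⟫_ℝ = if i = j then 1 else 0

noncomputable def refl [FiniteDimensional ℝ V] (R : RootSystemData V I) (i : I) :
    V ≃ₗᵢ[ℝ] V :=
  Submodule.reflection (ℝ ∙ R.simple i)ᗮ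

noncomputable def weylGroup [FiniteDimensional ℝ V] (R : RootSystemData V I) :
    Subgroup (V ≃ₗᵢ[ℝ] V) :=
  Subgroup.closure (Set.range R.refl)

noncomputable def inversions [FiniteDimensional ℝ V] (R : RootSystemData V I)
    (w : V ≃ₗᵢ[ℝ] V) : Finset V :=
  R.posRoots.filter fun α => w α ∈ R.negRoots

end RootSystemData


/-!
Since `o` changes sign along every edge of the Dynkin diagram and `i ↦ ī` is a diagram
automorphism, `o_i o_ī` does not depend on `i`. By irreducibility, the Schur-type identity
`∑_{α ∈ Δ} ⟪α, x⟫⟪α, y⟫ = 2h⟪x, y⟫` holds, so for every `i` exactly `h - 2` positive roots `α`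
satisfy `⟪α, α_i⟫ = 1`, and it suffices to find the parity of this number at one vertex. A
positive root of minimal height among those negated by `w₀` shows that some `i` is fixed by the
bar map or adjacent to `ī`.
* If `ī` is adjacent to `i`, then `o_i o_ī = -1`, and `α ↦ -w₀ (s_i α)` and its inverse pair off
  these roots except `α_i + α_ī`, so `h` is odd.
* If `ī = i`, then `o_i o_ī = 1`, and the involution `α ↦ -w₀ α` leaves only the roots negated by
  `w₀`. Being an involution of the Weyl group, `w₀` is the product of the reflections in pairwise
  orthogonal roots `α_i, γ_1, …, γ_k`; a folded reflection in each `γ_j` pairs off the remaining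
  roots, so `h` is even.
-/

open Finset

lemma Finset.neg_one_pow_card_eq_of_involution {α : Type*} {s : Finset α} (g : α → α)
    (hg : ∀ a ∈ s, g a ∈ s) (hgg : ∀ a ∈ s, g (g a) = a) :
    (-1 : ℤ) ^ #s = (-1) ^ #(s.filter fun a => g a = a) := by
  have hprod : ∏ a ∈ s, (if g a = a then 1 else -1 : ℤ) = 1 := by
    refine prod_involution (fun a _ => g a) (fun a ha => ?_) (fun a _ h hfix => ?_) hg hgg
    · by_cases hfix : g a = a
      · simp [hfix]
      · have : g (g a) ≠ g a := by rwa [hgg a ha, ne_comm]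
        simp [hfix, this]
    · simp [hfix] at h
  rw [prod_ite, prod_const_one, prod_const, one_mul] at hprod
  rw [← card_filter_add_card_filter_not (fun a => g a = a), pow_add, hprod, mul_one]

lemma LinearIsometryEquiv.inner_apply_eq_neg {V : Type*} [NormedAddCommGroup V]
    [InnerProductSpace ℝ V] (u : V ≃ₗᵢ[ℝ] V) {δ : V} (hδ : u δ = -δ) (x : V) :
    ⟪u x, δ⟫_ℝ = -⟪x, δ⟫_ℝ := by
  have := u.inner_map_map x δ
  rw [hδ, inner_neg_right] at this
  linarith

lemma LinearIsometryEquiv.sum_inner_apply_smul {V : Type*} [NormedAddCommGroup V]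
    [InnerProductSpace ℝ V] (u : V ≃ₗᵢ[ℝ] V) {G : Finset V} (hG : ∀ γ ∈ G, u γ = -γ)
    (x : V) :
    ∑ γ ∈ G, ⟪u x, γ⟫_ℝ • γ = -∑ γ ∈ G, ⟪x, γ⟫_ℝ • γ := by
  rw [← sum_neg_distrib]
  exact sum_congr rfl fun γ hγ => by rw [u.inner_apply_eq_neg (hG γ hγ), neg_smul]

namespace RootSystemData

variable {V : Type*} [NormedAddCommGroup V] [InnerProductSpace ℝ V] {I : Type*} [Fintype I]
  {R : RootSystemData V I} {α β γ δ : V} {i : I} {w : V ≃ₗᵢ[ℝ] V} {bar : I → I}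

section Coordinates

variable (R) in
noncomputable def simpleBasis : Module.Basis I ℝ V :=
  Module.Basis.mk R.indep R.span_eq.ge

@[simp]
lemma simpleBasis_apply (i : I) : R.simpleBasis i = R.simple i :=
  Module.Basis.mk_apply _ _ _

variable (R) in
noncomputable def coord (i : I) : V →ₗ[ℝ] ℝ :=
  R.simpleBasis.coord i

lemma coord_simple (i j : I) : R.coord i (R.simple j) = if j = i then 1 else 0 := by
  simp [coord, ← simpleBasis_apply, Finsupp.single_apply]

lemma coord_sum_smul (c : I → ℝ) (i : I) : R.coord i (∑ j, c j • R.simple j) = c i := by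
  simp [coord_simple]

lemma sum_coord_smul (x : V) : ∑ i, R.coord i x • R.simple i = x := by
  simpa [coord] using R.simpleBasis.sum_repr x

lemma ext_coord {x y : V} (h : ∀ i, R.coord i x = R.coord i y) : x = y := by
  rw [← sum_coord_smul (R := R) x, ← sum_coord_smul (R := R) y]
  simp only [h]

variable (R) in
noncomputable def height : V →ₗ[ℝ] ℝ :=
  ∑ i, R.coord i

lemma height_simple (i : I) : R.height (R.simple i) = 1 := by
  simp [height, coord_simple]

end Coordinates

section PositiveRoots

lemma mem_posRoots :
    α ∈ R.posRoots ↔ α ∈ R.roots ∧ ∃ c : I → ℕ, α = ∑ i, (c i : ℝ) • R.simple i := by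
  simp [posRoots]

lemma mem_negRoots : α ∈ R.negRoots ↔ -α ∈ R.posRoots := by
  simp [negRoots, neg_eq_iff_eq_neg]

lemma mem_roots_of_mem_posRoots (hα : α ∈ R.posRoots) : α ∈ R.roots :=
  (mem_posRoots.mp hα).1

lemma coord_nonneg (hα : α ∈ R.posRoots) (i : I) : 0 ≤ R.coord i α := by
  obtain ⟨-, c, rfl⟩ := mem_posRoots.mp hα
  rw [coord_sum_smul]
  positivity

lemma mem_posRoots_or_neg_mem (hα : α ∈ R.roots) : α ∈ R.posRoots ∨ -α ∈ R.posRoots := by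
  rcases R.pos_or_neg α hα with ⟨c, hc⟩ | ⟨c, hc⟩
  · exact .inl (mem_posRoots.mpr ⟨hα, c, hc⟩)
  · exact .inr (mem_posRoots.mpr ⟨R.neg_mem α hα, c, by rw [hc, neg_neg]⟩)

lemma neg_notMem_posRoots (hα : α ∈ R.posRoots) : -α ∉ R.posRoots := by
  intro hneg
  have hzero : α = 0 := ext_coord fun i => by
    have := coord_nonneg hneg i
    rw [map_neg] at this
    linarith [coord_nonneg hα i, (R.coord i).map_zero]
  exact R.zero_notMem (hzero ▸ mem_roots_of_mem_posRoots hα)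

lemma simple_mem_posRoots (i : I) : R.simple i ∈ R.posRoots :=
  mem_posRoots.mpr ⟨R.simple_mem i, fun j => if i = j then 1 else 0, by simp⟩

lemma simple_injective : Function.Injective R.simple := fun i j hij =>
  (by simpa [coord_simple] using congrArg (R.coord i) hij : j = i).symm

lemma exists_inner_simple_pos (hα : α ∈ R.posRoots) : ∃ k, 0 < ⟪α, R.simple k⟫_ℝ := by
  by_contra! h
  have hnonpos : ⟪α, α⟫_ℝ ≤ 0 := by
    rw [← congrArg (inner ℝ α) (sum_coord_smul (R := R) α), inner_sum]
    refine sum_nonpos fun k _ => ?_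
    rw [real_inner_smul_right]
    exact mul_nonpos_of_nonneg_of_nonpos (coord_nonneg hα k) (h k)
  exact R.zero_notMem (real_inner_self_nonpos.mp hnonpos ▸ mem_roots_of_mem_posRoots hα)

lemma sum_roots_eq_two_mul_sum_posRoots {f : V → ℝ} (hf : ∀ x, f (-x) = f x) :
    ∑ α ∈ R.roots, f α = 2 * ∑ α ∈ R.posRoots, f α := by
  have hroots : R.roots = R.posRoots ∪ R.negRoots := by
    ext α
    rw [mem_union, mem_negRoots]
    refine ⟨mem_posRoots_or_neg_mem, ?_⟩
    rintro (h | h)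
    · exact mem_roots_of_mem_posRoots h
    · simpa using R.neg_mem _ (mem_roots_of_mem_posRoots h)
  have hdisj : Disjoint R.posRoots R.negRoots :=
    disjoint_left.mpr fun _ hα hα' => neg_notMem_posRoots hα (mem_negRoots.mp hα')
  rw [hroots, sum_union hdisj, negRoots, sum_image fun _ _ _ _ => neg_inj.mp]
  simp [hf, two_mul]

end PositiveRoots

section Reflection

/-- The reflection in `γ` when `⟪γ, γ⟫ = 2`, the normalisation of the roots of a simply-laced
system. -/
noncomputable def reflect (γ : V) : V →ₗ[ℝ] V :=
  LinearMap.id - (innerₛₗ ℝ γ).smulRight γ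

lemma reflect_apply (γ x : V) : reflect γ x = x - ⟪x, γ⟫_ℝ • γ := by
  simp [reflect, real_inner_comm]

lemma reflect_neg (γ : V) : reflect (-γ) = reflect γ := by
  ext x
  simp [reflect_apply]

lemma reflect_of_inner_eq_zero {x : V} (h : ⟪x, γ⟫_ℝ = 0) : reflect γ x = x := by
  simp [reflect_apply, h]

lemma inner_reflect_self (hγ : ⟪γ, γ⟫_ℝ = 2) (x : V) : ⟪reflect γ x, γ⟫_ℝ = -⟪x, γ⟫_ℝ := by
  rw [reflect_apply, inner_sub_left, real_inner_smul_left, hγ]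
  ring

lemma reflect_self (hγ : ⟪γ, γ⟫_ℝ = 2) : reflect γ γ = -γ := by
  rw [reflect_apply, hγ]
  module

lemma reflect_reflect (hγ : ⟪γ, γ⟫_ℝ = 2) (x : V) : reflect γ (reflect γ x) = x := by
  rw [reflect_apply (x := reflect γ x), inner_reflect_self hγ, reflect_apply]
  module

lemma _root_.LinearIsometryEquiv.apply_reflect (u : V ≃ₗᵢ[ℝ] V) (γ x : V) :
    u (reflect γ x) = reflect (u γ) (u x) := by
  simp [reflect_apply]

lemma height_reflect_simple (i : I) (x : V) :
    R.height (reflect (R.simple i) x) = R.height x - ⟪x, R.simple i⟫_ℝ := by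
  simp [reflect_apply, height_simple]

end Reflection

section SimplyLaced

lemma reflect_mem_roots (hSL : R.IsSimplyLaced) (hγ : γ ∈ R.roots) (hβ : β ∈ R.roots) :
    reflect γ β ∈ R.roots := by
  have := R.reflect_mem γ hγ β hβ
  rwa [hSL γ hγ, mul_div_cancel_left₀ _ two_ne_zero, ← reflect_apply] at this

lemma eq_of_inner_eq_two (hα : ⟪α, α⟫_ℝ = 2) (hβ : ⟪β, β⟫_ℝ = 2) (h : ⟪α, β⟫_ℝ = 2) :
    α = β := by
  rw [← sub_eq_zero, ← inner_self_eq_zero (𝕜 := ℝ), real_inner_sub_sub_self, hα, hβ, h]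
  norm_num

lemma eq_add_of_inner_eq_one {s t : V} (hα : ⟪α, α⟫_ℝ = 2) (hs : ⟪s, s⟫_ℝ = 2)
    (ht : ⟪t, t⟫_ℝ = 2) (hst : ⟪s, t⟫_ℝ = -1) (hαs : ⟪α, s⟫_ℝ = 1) (hαt : ⟪α, t⟫_ℝ = 1) :
    α = s + t := by
  refine eq_of_inner_eq_two hα ?_ (by rw [inner_add_right, hαs, hαt]; norm_num)
  rw [real_inner_add_add_self, hs, ht, hst]
  norm_num

lemma inner_eq_neg_one_or_zero_or_one (hSL : R.IsSimplyLaced) (hα : α ∈ R.roots)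
    (hβ : β ∈ R.roots) (hne : α ≠ β) (hne' : α ≠ -β) :
    ⟪α, β⟫_ℝ = -1 ∨ ⟪α, β⟫_ℝ = 0 ∨ ⟪α, β⟫_ℝ = 1 := by
  obtain ⟨n, hn⟩ := R.pairing_int β hβ α hα
  rw [hSL β hβ, mul_div_cancel_left₀ _ two_ne_zero] at hn
  have hsub := real_inner_self_nonneg (x := α - β)
  have hadd := real_inner_self_nonneg (x := α + β)
  rw [real_inner_sub_sub_self, hSL α hα, hSL β hβ, hn] at hsub
  rw [real_inner_add_add_self, hSL α hα, hSL β hβ, hn] at hadd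
  have hn2 : n ≠ 2 := by
    rintro rfl
    exact hne (eq_of_inner_eq_two (hSL α hα) (hSL β hβ) (by rw [hn]; norm_num))
  have hn2' : n ≠ -2 := by
    rintro rfl
    refine hne' (eq_of_inner_eq_two (hSL α hα) (by simpa using hSL β hβ) ?_)
    rw [inner_neg_right, hn]
    norm_num
  have : -2 ≤ n := by exact_mod_cast (by linarith : (-2 : ℝ) ≤ n)
  have : n ≤ 2 := by exact_mod_cast (by linarith : (n : ℝ) ≤ 2)
  rw [hn]
  interval_cases n <;> simp_all

lemma inner_eq_one_of_pos (hSL : R.IsSimplyLaced) (hα : α ∈ R.roots) (hβ : β ∈ R.roots)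
    (hne : α ≠ β) (hpos : 0 < ⟪α, β⟫_ℝ) : ⟪α, β⟫_ℝ = 1 := by
  have hne' : α ≠ -β := by
    rintro rfl
    rw [inner_neg_left, hSL β hβ] at hpos
    norm_num at hpos
  rcases inner_eq_neg_one_or_zero_or_one hSL hα hβ hne hne' with h | h | h
  · linarith
  · linarith
  · exact h

lemma inner_simple_eq_zero_or_neg_one (hSL : R.IsSimplyLaced) {i j : I} (hij : i ≠ j) :
    ⟪R.simple i, R.simple j⟫_ℝ = 0 ∨ ⟪R.simple i, R.simple j⟫_ℝ = -1 := by
  have hne' : R.simple i ≠ -R.simple j := fun h =>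
    neg_notMem_posRoots (simple_mem_posRoots j) (h ▸ simple_mem_posRoots i)
  rcases inner_eq_neg_one_or_zero_or_one hSL (R.simple_mem i) (R.simple_mem j)
    (R.simple_injective.ne hij) hne' with h | h | h
  · exact .inr h
  · exact .inl h
  · have hroot : R.simple i - R.simple j ∈ R.roots := by
      simpa [reflect_apply, h] using reflect_mem_roots hSL (R.simple_mem j) (R.simple_mem i)
    rcases mem_posRoots_or_neg_mem hroot with hp | hp
    · exact absurd (coord_nonneg hp j) (by simp [coord_simple, hij])
    · exact absurd (coord_nonneg hp i) (by simp [coord_simple, Ne.symm hij])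

lemma reflect_simple_mem_posRoots (hSL : R.IsSimplyLaced) (hα : α ∈ R.posRoots)
    (hne : α ≠ R.simple i) : reflect (R.simple i) α ∈ R.posRoots := by
  refine (mem_posRoots_or_neg_mem (reflect_mem_roots hSL (R.simple_mem i)
    (mem_roots_of_mem_posRoots hα))).resolve_right fun hneg => hne ?_
  have hcoord : ∀ k ≠ i, R.coord k α = 0 := fun k hk => by
    have := coord_nonneg hneg k
    simp only [reflect_apply, map_neg, map_sub, map_smul, coord_simple, if_neg hk.symm,
      smul_eq_mul, mul_zero, sub_zero] at this
    linarith [coord_nonneg hα k]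
  have hα_eq : α = R.coord i α • R.simple i := by
    conv_lhs => rw [← sum_coord_smul (R := R) α]
    exact sum_eq_single i (fun k _ hk => by rw [hcoord k hk, zero_smul]) (by simp)
  have hsq : R.coord i α ^ 2 = 1 := by
    have h := hSL α (mem_roots_of_mem_posRoots hα)
    rw [hα_eq, real_inner_smul_left, real_inner_smul_right, hSL _ (R.simple_mem i)] at h
    linarith
  have : R.coord i α = 1 := by nlinarith [coord_nonneg hα i]
  rw [hα_eq, this, one_smul]

lemma reflect_simple_mem_erase (hSL : R.IsSimplyLaced) (hα : α ∈ R.posRoots.erase (R.simple i)) :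
    reflect (R.simple i) α ∈ R.posRoots.erase (R.simple i) := by
  obtain ⟨hne, hpos⟩ := mem_erase.mp hα
  have hs := hSL _ (R.simple_mem i)
  refine mem_erase.mpr ⟨fun h => ?_, reflect_simple_mem_posRoots hSL hpos hne⟩
  have : α = -R.simple i := by rw [← reflect_reflect hs α, h, reflect_self hs]
  exact neg_notMem_posRoots (simple_mem_posRoots (R := R) i) (this ▸ hpos)

lemma sum_inner_simple_erase (hSL : R.IsSimplyLaced) (i : I) :
    ∑ α ∈ R.posRoots.erase (R.simple i), ⟪α, R.simple i⟫_ℝ = 0 := by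
  have hs := hSL _ (R.simple_mem i)
  exact sum_involution (fun α _ => reflect (R.simple i) α)
    (fun α _ => by rw [inner_reflect_self hs, add_neg_cancel])
    (fun α _ hα h => hα (by linarith [h ▸ inner_reflect_self hs α]))
    (fun α hα => reflect_simple_mem_erase hSL hα) (fun α _ => reflect_reflect hs α)

lemma sub_simple_mem_posRoots (hSL : R.IsSimplyLaced) (hα : α ∈ R.posRoots)
    (h : ⟪α, R.simple i⟫_ℝ = 1) : α - R.simple i ∈ R.posRoots := by
  have hne : α ≠ R.simple i := by
    rintro rfl
    rw [hSL _ (R.simple_mem i)] at h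
    norm_num at h
  simpa [reflect_apply, h] using reflect_simple_mem_posRoots hSL hα hne

lemma add_simple_mem_posRoots (hSL : R.IsSimplyLaced) (hα : α ∈ R.posRoots)
    (h : ⟪α, R.simple i⟫_ℝ = -1) : α + R.simple i ∈ R.posRoots := by
  have hne : α ≠ R.simple i := by
    rintro rfl
    rw [hSL _ (R.simple_mem i)] at h
    norm_num at h
  simpa [reflect_apply, h] using reflect_simple_mem_posRoots hSL hα hne

end SimplyLaced

section FoldedReflection

variable (R) in
noncomputable def posRootsInnerEqOne (i : I) : Finset V :=
  R.posRoots.filter fun α => ⟪α, R.simple i⟫_ℝ = 1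

lemma mem_posRootsInnerEqOne :
    α ∈ R.posRootsInnerEqOne i ↔ α ∈ R.posRoots ∧ ⟪α, R.simple i⟫_ℝ = 1 :=
  mem_filter

lemma filter_posRootsInnerEqOne_inner_eq_one (hSL : R.IsSimplyLaced) {j : I}
    (hij : ⟪R.simple i, R.simple j⟫_ℝ = -1) :
    (R.posRootsInnerEqOne i).filter (fun α => ⟪α, R.simple j⟫_ℝ = 1) =
      {R.simple i + R.simple j} := by
  have hs := hSL _ (R.simple_mem i)
  have ht := hSL _ (R.simple_mem j)
  ext α
  simp only [mem_filter, mem_posRootsInnerEqOne, mem_singleton]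
  constructor
  · rintro ⟨⟨hpos, h1⟩, h2⟩
    exact eq_add_of_inner_eq_one (hSL α (mem_roots_of_mem_posRoots hpos)) hs ht hij h1 h2
  · rintro rfl
    refine ⟨⟨add_simple_mem_posRoots hSL (simple_mem_posRoots i) hij, ?_⟩, ?_⟩
    · rw [inner_add_left, hs, real_inner_comm, hij]
      norm_num
    · rw [inner_add_left, hij, ht]
      norm_num

variable (R) in
/-- Folding negative values back by `β ↦ α_i - β` makes the reflection `s_γ` with `γ ⊥ α_i` an
involution of `R.posRootsInnerEqOne i`. -/
noncomputable def foldedReflect (i : I) (γ α : V) : V :=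
  if reflect γ α ∈ R.posRoots then reflect γ α else R.simple i - reflect γ α

lemma foldedReflect_mem (hSL : R.IsSimplyLaced) (hγ : γ ∈ R.roots)
    (hγi : ⟪γ, R.simple i⟫_ℝ = 0) (hα : α ∈ R.posRootsInnerEqOne i) :
    R.foldedReflect i γ α ∈ R.posRootsInnerEqOne i := by
  obtain ⟨hpos, h1⟩ := mem_posRootsInnerEqOne.mp hα
  have hr1 : ⟪reflect γ α, R.simple i⟫_ℝ = 1 := by
    rw [reflect_apply, inner_sub_left, real_inner_smul_left, hγi, h1, mul_zero, sub_zero]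
  unfold foldedReflect
  split_ifs with hr
  · exact mem_posRootsInnerEqOne.mpr ⟨hr, hr1⟩
  · have hneg := (mem_posRoots_or_neg_mem (reflect_mem_roots hSL hγ
      (mem_roots_of_mem_posRoots hpos))).resolve_left hr
    refine mem_posRootsInnerEqOne.mpr ⟨?_, ?_⟩
    · simpa [neg_add_eq_sub] using
        add_simple_mem_posRoots hSL hneg (by rw [inner_neg_left, hr1])
    · rw [inner_sub_left, hr1, hSL _ (R.simple_mem i)]
      norm_num

lemma foldedReflect_foldedReflect (hSL : R.IsSimplyLaced) (hγ : γ ∈ R.roots)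
    (hγi : ⟪γ, R.simple i⟫_ℝ = 0) (hα : α ∈ R.posRootsInnerEqOne i) :
    R.foldedReflect i γ (R.foldedReflect i γ α) = α := by
  have hγ2 := hSL γ hγ
  by_cases hr : reflect γ α ∈ R.posRoots
  · rw [show R.foldedReflect i γ α = reflect γ α from if_pos hr, foldedReflect,
      reflect_reflect hγ2, if_pos (mem_posRootsInnerEqOne.mp hα).1]
  · have hsγ : reflect γ (R.simple i) = R.simple i :=
      reflect_of_inner_eq_zero (by rw [real_inner_comm, hγi])
    obtain ⟨hpos, h1⟩ := mem_posRootsInnerEqOne.mp hα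
    have hneg : R.simple i - α ∉ R.posRoots := fun h =>
      neg_notMem_posRoots h (by simpa using sub_simple_mem_posRoots hSL hpos h1)
    rw [show R.foldedReflect i γ α = R.simple i - reflect γ α from if_neg hr, foldedReflect,
      map_sub, hsγ, reflect_reflect hγ2, if_neg hneg, sub_sub_cancel]

lemma foldedReflect_eq_self_iff (hSL : R.IsSimplyLaced) (hγ : γ ∈ R.roots)
    (hγi : ⟪γ, R.simple i⟫_ℝ = 0) (hα : α ∈ R.posRootsInnerEqOne i) :
    R.foldedReflect i γ α = α ↔ ⟪α, γ⟫_ℝ = 0 := by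
  obtain ⟨hpos, h1⟩ := mem_posRootsInnerEqOne.mp hα
  refine ⟨fun hfix => ?_, fun h0 => by rw [foldedReflect, reflect_of_inner_eq_zero h0, if_pos hpos]⟩
  unfold foldedReflect at hfix
  split_ifs at hfix
  · rw [reflect_apply, sub_eq_self, smul_eq_zero] at hfix
    exact hfix.resolve_right fun h => R.zero_notMem (h ▸ hγ)
  · have hne : α ≠ γ := by
      rintro rfl
      rw [hγi] at h1
      norm_num at h1
    have hne' : α ≠ -γ := by
      rintro rfl
      rw [inner_neg_left, hγi] at h1
      norm_num at h1
    have hsq := congrArg (fun x => ⟪x, α⟫_ℝ) hfix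
    simp only [reflect_apply, inner_sub_left, real_inner_smul_left] at hsq
    rw [real_inner_comm α (R.simple i), real_inner_comm α γ, h1,
      hSL α (mem_roots_of_mem_posRoots hpos)] at hsq
    rcases inner_eq_neg_one_or_zero_or_one hSL (mem_roots_of_mem_posRoots hpos) hγ hne hne'
      with h | h | h <;> rw [h] at hsq <;> norm_num at hsq

lemma inner_foldedReflect_eq_zero_iff (hδγ : ⟪γ, δ⟫_ℝ = 0) (hδi : ⟪R.simple i, δ⟫_ℝ = 0) :
    ⟪R.foldedReflect i γ α, δ⟫_ℝ = 0 ↔ ⟪α, δ⟫_ℝ = 0 := by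
  have hr : ⟪reflect γ α, δ⟫_ℝ = ⟪α, δ⟫_ℝ := by
    rw [reflect_apply, inner_sub_left, real_inner_smul_left, hδγ, mul_zero, sub_zero]
  unfold foldedReflect
  split_ifs
  · rw [hr]
  · rw [inner_sub_left, hδi, hr, zero_sub, neg_eq_zero]

lemma apply_foldedReflect (w : V ≃ₗᵢ[ℝ] V) (hwγ : w γ = -γ) (hwi : w (R.simple i) = -R.simple i)
    (hwα : w α = -α) : w (R.foldedReflect i γ α) = -R.foldedReflect i γ α := by
  have hr : w (reflect γ α) = -reflect γ α := by
    rw [w.apply_reflect, hwγ, hwα, reflect_neg, map_neg]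
  unfold foldedReflect
  split_ifs
  · exact hr
  · rw [map_sub, hwi, hr]
    abel

lemma neg_one_pow_card_filter_forall_inner_eq_zero (hSL : R.IsSimplyLaced)
    (hwi : w (R.simple i) = -R.simple i) (G : Finset V)
    (hG : ∀ γ ∈ G, γ ∈ R.roots ∧ w γ = -γ ∧ ⟪γ, R.simple i⟫_ℝ = 0)
    (horth : (G : Set V).Pairwise fun γ δ => ⟪γ, δ⟫_ℝ = 0) :
    (-1 : ℤ) ^ #((R.posRootsInnerEqOne i).filter fun α => w α = -α) =
      (-1) ^ #((R.posRootsInnerEqOne i).filter fun α => w α = -α ∧ ∀ γ ∈ G, ⟪α, γ⟫_ℝ = 0) := by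
  induction G using Finset.induction_on with
  | empty => simp
  | insert γ G hγG ih =>
    rw [coe_insert, Set.pairwise_insert] at horth
    rw [ih (fun δ hδ => hG δ (mem_insert_of_mem hδ)) horth.1]
    obtain ⟨hγ, hwγ, hγi⟩ := hG γ (mem_insert_self γ G)
    have hγδ : ∀ δ ∈ G, ⟪γ, δ⟫_ℝ = 0 := fun δ hδ =>
      (horth.2 δ hδ (by rintro rfl; exact hγG hδ)).1
    have hiδ : ∀ δ ∈ G, ⟪R.simple i, δ⟫_ℝ = 0 := fun δ hδ => by
      rw [real_inner_comm]; exact (hG δ (mem_insert_of_mem hδ)).2.2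
    rw [Finset.neg_one_pow_card_eq_of_involution (R.foldedReflect i γ)]
    · congr 2
      ext α
      simp only [mem_filter, forall_mem_insert]
      constructor
      · rintro ⟨⟨hα, hwα, hαG⟩, hfix⟩
        exact ⟨hα, hwα, (foldedReflect_eq_self_iff hSL hγ hγi hα).mp hfix, hαG⟩
      · rintro ⟨hα, hwα, hαγ, hαG⟩
        exact ⟨⟨hα, hwα, hαG⟩, (foldedReflect_eq_self_iff hSL hγ hγi hα).mpr hαγ⟩
    · intro α hα
      obtain ⟨hα, hwα, hαG⟩ := mem_filter.mp hα
      exact mem_filter.mpr ⟨foldedReflect_mem hSL hγ hγi hα, apply_foldedReflect w hwγ hwi hwα,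
        fun δ hδ => (inner_foldedReflect_eq_zero_iff (hγδ δ hδ) (hiδ δ hδ)).mpr (hαG δ hδ)⟩
    · exact fun α hα => foldedReflect_foldedReflect hSL hγ hγi (mem_filter.mp hα).1

end FoldedReflection

section WeylGroup

variable [FiniteDimensional ℝ V] {u : V ≃ₗᵢ[ℝ] V}

lemma refl_apply (hSL : R.IsSimplyLaced) (i : I) (x : V) :
    R.refl i x = reflect (R.simple i) x := by
  have hnorm : ‖R.simple i‖ ^ 2 = 2 := by
    rw [← real_inner_self_eq_norm_sq]
    exact hSL _ (R.simple_mem i)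
  rw [refl, Submodule.reflection_orthogonal_apply, Submodule.reflection_singleton_apply,
    RCLike.ofReal_real_eq_id, id, hnorm, reflect_apply, real_inner_comm]
  module

@[simp]
lemma refl_inv (i : I) : (R.refl i)⁻¹ = R.refl i :=
  Submodule.reflection_inv

lemma refl_mul_self (i : I) : R.refl i * R.refl i = 1 :=
  Submodule.reflection_mul_reflection _

@[simp]
lemma refl_refl (i : I) (x : V) : R.refl i (R.refl i x) = x :=
  Submodule.reflection_reflection _ _

lemma refl_mem_weylGroup (i : I) : R.refl i ∈ R.weylGroup :=
  Subgroup.subset_closure ⟨i, rfl⟩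

variable (R) in
noncomputable def reflProd (l : List I) : V ≃ₗᵢ[ℝ] V :=
  (l.map R.refl).prod

@[simp]
lemma reflProd_nil : R.reflProd [] = 1 := rfl

@[simp]
lemma reflProd_cons (i : I) (l : List I) : R.reflProd (i :: l) = R.refl i * R.reflProd l := by
  simp [reflProd]

@[simp]
lemma reflProd_append (l l' : List I) : R.reflProd (l ++ l') = R.reflProd l * R.reflProd l' := by
  simp [reflProd]

lemma reflProd_reverse (l : List I) : R.reflProd l.reverse = (R.reflProd l)⁻¹ := by
  induction l with
  | nil => simp
  | cons i l ih => simp [ih]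

lemma reflProd_mem_weylGroup (l : List I) : R.reflProd l ∈ R.weylGroup := by
  induction l with
  | nil => exact R.weylGroup.one_mem
  | cons i l ih => simpa using R.weylGroup.mul_mem (refl_mem_weylGroup i) ih

lemma exists_reflProd_eq (hu : u ∈ R.weylGroup) : ∃ l, R.reflProd l = u := by
  induction hu using Subgroup.closure_induction with
  | mem _ h =>
    obtain ⟨i, rfl⟩ := h
    exact ⟨[i], by simp⟩
  | one => exact ⟨[], rfl⟩
  | mul _ _ _ _ ha hb =>
    obtain ⟨la, rfl⟩ := ha
    obtain ⟨lb, rfl⟩ := hb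
    exact ⟨la ++ lb, reflProd_append la lb⟩
  | inv _ _ ha =>
    obtain ⟨la, rfl⟩ := ha
    exact ⟨la.reverse, reflProd_reverse la⟩

lemma apply_mem_roots (hSL : R.IsSimplyLaced) (hu : u ∈ R.weylGroup) (hα : α ∈ R.roots) :
    u α ∈ R.roots := by
  obtain ⟨l, rfl⟩ := exists_reflProd_eq hu
  induction l with
  | nil => exact hα
  | cons i l ih =>
    simpa [refl_apply hSL] using
      reflect_mem_roots hSL (R.simple_mem i) (ih (reflProd_mem_weylGroup l))

/-- The exchange condition. -/
lemma exists_reflProd_eq_mul_refl (hSL : R.IsSimplyLaced) (l : List I) (i : I)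
    (hneg : -R.reflProd l (R.simple i) ∈ R.posRoots) :
    ∃ l' : List I, l'.length < l.length ∧ R.reflProd l' = R.reflProd l * R.refl i := by
  induction l with
  | nil => exact absurd hneg (neg_notMem_posRoots (simple_mem_posRoots i))
  | cons j l ih =>
    by_cases hl : -R.reflProd l (R.simple i) ∈ R.posRoots
    · obtain ⟨l', hlen, hl'⟩ := ih hl
      exact ⟨j :: l', by simpa using hlen, by simp [hl', mul_assoc]⟩
    · have hpos : R.reflProd l (R.simple i) ∈ R.posRoots :=
        (mem_posRoots_or_neg_mem (apply_mem_roots hSL (reflProd_mem_weylGroup l)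
          (R.simple_mem i))).resolve_right hl
      have hsimple : R.reflProd l (R.simple i) = R.simple j := by
        by_contra hne
        refine neg_notMem_posRoots (reflect_simple_mem_posRoots hSL hpos hne) ?_
        simpa [refl_apply hSL] using hneg
      have hconj : R.refl j * R.reflProd l = R.reflProd l * R.refl i := by
        ext x
        simp [refl_apply hSL, LinearIsometryEquiv.apply_reflect, hsimple]
      refine ⟨l, by simp, ?_⟩
      rw [reflProd_cons, hconj, mul_assoc, refl_mul_self, mul_one]

lemma eq_one_of_forall_apply_simple_mem_posRoots (hSL : R.IsSimplyLaced)
    (hu : u ∈ R.weylGroup) (h : ∀ i, u (R.simple i) ∈ R.posRoots) : u = 1 := by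
  obtain ⟨l, rfl⟩ := exists_reflProd_eq hu
  obtain ⟨n, hn⟩ : ∃ n, l.length = n := ⟨_, rfl⟩
  induction n using Nat.strong_induction_on generalizing l with
  | _ n ih =>
  rcases l.eq_nil_or_concat' with rfl | ⟨t, i, rfl⟩
  · rfl
  · have hneg : -R.reflProd t (R.simple i) ∈ R.posRoots := by
      simpa [refl_apply hSL, reflect_self (hSL _ (R.simple_mem i))] using h i
    obtain ⟨t', hlen, ht'⟩ := exists_reflProd_eq_mul_refl hSL t i hneg
    have heq : R.reflProd t' = R.reflProd (t ++ [i]) := by simp [ht']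
    rw [← heq] at h ⊢
    exact ih _ (by simp at hn; omega) _ (reflProd_mem_weylGroup t') h rfl

lemma exists_apply_eq_neg_of_mul_self_eq_one (hSL : R.IsSimplyLaced) (hu : u ∈ R.weylGroup)
    (hinv : u * u = 1) (hne : u ≠ 1) : ∃ δ ∈ R.roots, u δ = -δ := by
  obtain ⟨l, rfl⟩ := exists_reflProd_eq hu
  obtain ⟨n, hn⟩ : ∃ n, l.length = n := ⟨_, rfl⟩
  induction n using Nat.strong_induction_on generalizing l with
  | _ n ih =>
  obtain ⟨i, hi⟩ : ∃ i, -R.reflProd l (R.simple i) ∈ R.posRoots := by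
    by_contra! h
    exact hne (eq_one_of_forall_apply_simple_mem_posRoots hSL (reflProd_mem_weylGroup l) fun i =>
      (mem_posRoots_or_neg_mem (apply_mem_roots hSL (reflProd_mem_weylGroup l)
        (R.simple_mem i))).resolve_right (h i))
  by_cases hsimple : -R.reflProd l (R.simple i) = R.simple i
  · exact ⟨R.simple i, R.simple_mem i, neg_eq_iff_eq_neg.mp hsimple⟩
  obtain ⟨l₁, hlen₁, hl₁⟩ := exists_reflProd_eq_mul_refl hSL l i hi
  have hl₁' : R.reflProd l₁.reverse = R.refl i * R.reflProd l := by
    rw [reflProd_reverse, hl₁, mul_inv_rev, refl_inv, inv_eq_of_mul_eq_one_right hinv]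
  have hneg₁ : -R.reflProd l₁.reverse (R.simple i) ∈ R.posRoots := by
    simpa [hl₁', refl_apply hSL] using reflect_simple_mem_posRoots hSL hi hsimple
  obtain ⟨l₂, hlen₂, hl₂⟩ := exists_reflProd_eq_mul_refl hSL l₁.reverse i hneg₁
  rw [hl₁'] at hl₂
  have hinv₂ : R.reflProd l₂ * R.reflProd l₂ = 1 := by
    rw [hl₂, show ∀ s u : V ≃ₗᵢ[ℝ] V, s * u * s * (s * u * s) = s * (u * (s * s) * u) * s by
      intros; group, refl_mul_self, mul_one, hinv, mul_one, refl_mul_self]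
  have hne₂ : R.reflProd l₂ ≠ 1 := by
    intro h
    apply hne
    rw [show R.reflProd l = (R.refl i)⁻¹ * (R.refl i * R.reflProd l * R.refl i) * (R.refl i)⁻¹ by
      group, ← hl₂, h, refl_inv, mul_one, refl_mul_self]
  obtain ⟨δ, hδ, hδneg⟩ :=
    ih _ (by simp at hlen₂; omega) l₂ (reflProd_mem_weylGroup _) hinv₂ hne₂ rfl
  refine ⟨R.refl i δ, by simpa [refl_apply hSL] using reflect_mem_roots hSL (R.simple_mem i) hδ, ?_⟩
  have hconj : R.reflProd l (R.refl i δ) = R.refl i (R.reflProd l₂ δ) := by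
    simp [hl₂, refl_refl]
  rw [hconj, hδneg, map_neg]

lemma exists_mem_weylGroup_apply_simple_eq (hSL : R.IsSimplyLaced) (hγ : γ ∈ R.roots) :
    ∃ u ∈ R.weylGroup, ∃ i, u (R.simple i) = γ := by
  suffices hpos : ∀ γ ∈ R.posRoots, ∃ u ∈ R.weylGroup, ∃ i, u (R.simple i) = γ by
    rcases mem_posRoots_or_neg_mem hγ with hp | hn
    · exact hpos γ hp
    · obtain ⟨u, hu, i, hui⟩ := hpos _ hn
      refine ⟨u * R.refl i, R.weylGroup.mul_mem hu (refl_mem_weylGroup i), i, ?_⟩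
      simp [refl_apply hSL, reflect_self (hSL _ (R.simple_mem i)), hui]
  by_contra! hbad
  obtain ⟨γ, hγ, hmin⟩ :=
    (R.posRoots.filter fun γ => ∀ u ∈ R.weylGroup, ∀ i, u (R.simple i) ≠ γ).exists_min_image
      R.height (by simpa [Finset.Nonempty] using hbad)
  rw [mem_filter] at hγ
  obtain ⟨k, hk⟩ := exists_inner_simple_pos hγ.1
  have hne : γ ≠ R.simple k := fun h => hγ.2 1 R.weylGroup.one_mem k h.symm
  have hone := inner_eq_one_of_pos hSL (mem_roots_of_mem_posRoots hγ.1) (R.simple_mem k) hne hk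
  have hβ := reflect_simple_mem_posRoots hSL hγ.1 hne
  obtain ⟨v, hv, j, hvj⟩ : ∃ v ∈ R.weylGroup, ∃ j, v (R.simple j) = reflect (R.simple k) γ := by
    by_contra! h
    have := hmin _ (mem_filter.mpr ⟨hβ, h⟩)
    rw [height_reflect_simple, hone] at this
    linarith
  refine hγ.2 (R.refl k * v) (R.weylGroup.mul_mem (refl_mem_weylGroup k) hv) j ?_
  simp [hvj, refl_apply hSL, reflect_reflect (hSL _ (R.simple_mem k))]

lemma exists_mem_weylGroup_eq_reflect (hSL : R.IsSimplyLaced) (hγ : γ ∈ R.roots) :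
    ∃ u ∈ R.weylGroup, ∀ x, u x = reflect γ x := by
  obtain ⟨v, hv, i, rfl⟩ := exists_mem_weylGroup_apply_simple_eq hSL hγ
  refine ⟨v * R.refl i * v⁻¹, mul_mem (mul_mem hv (refl_mem_weylGroup i)) (inv_mem hv),
    fun x => ?_⟩
  simp [refl_apply hSL, LinearIsometryEquiv.apply_reflect]

/-- `x - ∑ γ ∈ G, ⟪x, γ⟫ • γ` is the product of the commuting reflections in the roots of `G`. -/
lemma exists_mem_weylGroup_eq_sub_sum (hSL : R.IsSimplyLaced) (G : Finset V)
    (hG : ∀ γ ∈ G, γ ∈ R.roots) (horth : (G : Set V).Pairwise fun γ δ => ⟪γ, δ⟫_ℝ = 0) :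
    ∃ v ∈ R.weylGroup, ∀ x, v x = x - ∑ γ ∈ G, ⟪x, γ⟫_ℝ • γ := by
  induction G using Finset.induction_on with
  | empty => exact ⟨1, R.weylGroup.one_mem, by simp⟩
  | insert δ G hδ ih =>
    rw [coe_insert, Set.pairwise_insert] at horth
    obtain ⟨v, hv, hvx⟩ := ih (fun γ hγ => hG γ (mem_insert_of_mem hγ)) horth.1
    obtain ⟨r, hr, hrx⟩ := exists_mem_weylGroup_eq_reflect hSL (hG δ (mem_insert_self δ G))
    have hperp : ∀ γ ∈ G, ⟪γ, δ⟫_ℝ = 0 := fun γ hγ =>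
      (horth.2 γ hγ (by rintro rfl; exact hδ hγ)).2
    refine ⟨r * v, R.weylGroup.mul_mem hr hv, fun x => ?_⟩
    have hzero : ∑ γ ∈ G, ⟪⟪x, γ⟫_ℝ • γ, δ⟫_ℝ = 0 :=
      sum_eq_zero fun γ hγ => by rw [real_inner_smul_left, hperp γ hγ, mul_zero]
    rw [LinearIsometryEquiv.coe_mul, Function.comp_apply, hrx, hvx, reflect_apply, sum_insert hδ,
      inner_sub_left, sum_inner, hzero]
    module

end WeylGroup

section Involutions

variable [FiniteDimensional ℝ V]

lemma apply_eq_sub_sum_of_forall_exists_inner_ne_zero (hSL : R.IsSimplyLaced)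
    (hwW : w ∈ R.weylGroup) (hinv : w * w = 1) {G : Finset V}
    (hG : ∀ γ ∈ G, γ ∈ R.roots ∧ w γ = -γ) (horth : (G : Set V).Pairwise fun γ δ => ⟪γ, δ⟫_ℝ = 0)
    (hmax : ∀ δ ∈ R.roots, w δ = -δ → ∃ γ ∈ G, ⟪δ, γ⟫_ℝ ≠ 0) (x : V) :
    w x = x - ∑ γ ∈ G, ⟪x, γ⟫_ℝ • γ := by
  obtain ⟨v, hvW, hv⟩ := exists_mem_weylGroup_eq_sub_sum hSL G (fun γ hγ => (hG γ hγ).1) horth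
  have hvγ : ∀ γ ∈ G, v γ = -γ := fun γ hγ => by
    have hsum : ∑ δ ∈ G, ⟪γ, δ⟫_ℝ • δ = ⟪γ, γ⟫_ℝ • γ := sum_eq_single γ
      (fun δ hδ hne => by rw [horth hγ hδ (Ne.symm hne), zero_smul]) (fun h => absurd hγ h)
    rw [hv, hsum, hSL γ (hG γ hγ).1]
    module
  have hww (x : V) : w (w x) = x := by simpa using congrArg (· x) hinv
  have hvv (x : V) : v (v x) = x := by
    rw [hv (v x), v.sum_inner_apply_smul hvγ, hv, sub_neg_eq_add, sub_add_cancel]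
  have hcomm (x : V) : w (v x) = v (w x) := by
    rw [hv, hv (w x), map_sub, map_sum, w.sum_inner_apply_smul fun γ hγ => (hG γ hγ).2,
      ← sum_neg_distrib, sum_congr rfl fun γ hγ => by rw [map_smul, (hG γ hγ).2, smul_neg]]
  have hwv : w * v = 1 := by
    by_contra hne
    obtain ⟨δ, hδ, huδ⟩ := exists_apply_eq_neg_of_mul_self_eq_one hSL (mul_mem hwW hvW)
      (by ext x; simp [hcomm, hww, hvv]) hne
    have hδG : ∀ γ ∈ G, ⟪δ, γ⟫_ℝ = 0 := fun γ hγ => by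
      have h := (w * v).inner_apply_eq_neg huδ γ
      rw [LinearIsometryEquiv.coe_mul, Function.comp_apply, hvγ γ hγ, map_neg, (hG γ hγ).2,
        neg_neg] at h
      rw [real_inner_comm]
      linarith
    have hwδ : w δ = -δ := by
      rw [← huδ, LinearIsometryEquiv.coe_mul, Function.comp_apply, hv,
        sum_eq_zero fun γ hγ => by rw [hδG γ hγ, zero_smul], sub_zero]
    obtain ⟨γ, hγ, hne⟩ := hmax δ hδ hwδ
    exact hne (hδG γ hγ)
  have := congrArg (· (v x)) hwv
  simp only [LinearIsometryEquiv.coe_mul, Function.comp_apply, hvv,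
    LinearIsometryEquiv.coe_one, id] at this
  rw [this, hv]

lemma exists_pairwise_orthogonal_eq_sub_sum (hSL : R.IsSimplyLaced) (hwW : w ∈ R.weylGroup)
    (hinv : w * w = 1) {s : V} (hs : s ∈ R.roots) (hws : w s = -s) :
    ∃ G : Finset V, s ∈ G ∧ (∀ γ ∈ G, γ ∈ R.roots ∧ w γ = -γ) ∧
      (G : Set V).Pairwise (fun γ δ => ⟪γ, δ⟫_ℝ = 0) ∧ ∀ x, w x = x - ∑ γ ∈ G, ⟪x, γ⟫_ℝ • γ := by
  let family : Finset (Finset V) := R.roots.powerset.filter fun G =>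
    s ∈ G ∧ (∀ γ ∈ G, w γ = -γ) ∧ (G : Set V).Pairwise fun γ δ => ⟪γ, δ⟫_ℝ = 0
  obtain ⟨G, hGmax⟩ := Finset.exists_maximal (s := family) ⟨{s}, by simp [family, hs, hws]⟩
  obtain ⟨hGroots, hsG, hwG, horth⟩ := by simpa [family] using hGmax.prop
  have hG : ∀ γ ∈ G, γ ∈ R.roots ∧ w γ = -γ := fun γ hγ => ⟨hGroots hγ, hwG γ hγ⟩
  refine ⟨G, hsG, hG, horth, apply_eq_sub_sum_of_forall_exists_inner_ne_zero hSL hwW hinv hG horth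
    fun δ hδ hwδ => ?_⟩
  by_contra! hδG
  have hδG' : δ ∉ G := fun h => R.zero_notMem ((by simpa using hδG δ h : δ = 0) ▸ hδ)
  have hmem : insert δ G ∈ family := by
    simp only [family, mem_filter, mem_powerset, insert_subset_iff, mem_insert, forall_eq_or_imp,
      coe_insert, Set.pairwise_insert]
    exact ⟨⟨hδ, hGroots⟩, .inr hsG, ⟨hwδ, hwG⟩, horth, fun γ hγ _ =>
      ⟨hδG γ hγ, by rw [real_inner_comm]; exact hδG γ hγ⟩⟩
  exact hδG' (hGmax.2 hmem (subset_insert δ G) (mem_insert_self δ G))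

end Involutions

section Irreducible

lemma IsIrreducible.forall_of_inner_ne_zero (hirr : R.IsIrreducible) {p : I → Prop}
    (hp : ∀ i j, ⟪R.simple i, R.simple j⟫_ℝ ≠ 0 → p i → p j) (hi : p i) (j : I) : p j := by
  rcases hirr {k | p k} fun k hk l hl => by_contra fun h => hl (hp k l h hk) with h | h
  · exact absurd (h ▸ hi : i ∈ (∅ : Set I)) (Set.notMem_empty i)
  · exact (h ▸ Set.mem_univ j : j ∈ {k | p k})

lemma mul_bar_eq_mul_bar (hSL : R.IsSimplyLaced) (hirr : R.IsIrreducible)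
    (hbar : ∀ i, w (R.simple i) = -R.simple (bar i)) {o : I → ℤ} (ho : ∀ i, o i = 1 ∨ o i = -1)
    (hsign : ∀ i j, ⟪R.simple i, R.simple j⟫_ℝ < 0 → o i * o j = -1) (i j : I) :
    o i * o (bar i) = o j * o (bar j) := by
  have hsq (m : I) : o m ^ 2 = 1 := by rcases ho m with h | h <;> simp [h]
  refine (hirr.forall_of_inner_ne_zero (p := fun k => o k * o (bar k) = o i * o (bar i))
    (fun k l hkl hk => ?_) rfl j).symm
  rcases eq_or_ne k l with rfl | hne
  · exact hk
  have hadj : ⟪R.simple k, R.simple l⟫_ℝ = -1 :=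
    (inner_simple_eq_zero_or_neg_one hSL hne).resolve_left hkl
  have hadj' : ⟪R.simple (bar k), R.simple (bar l)⟫_ℝ = -1 := by
    have := w.inner_map_map (R.simple k) (R.simple l)
    rwa [hbar, hbar, inner_neg_left, inner_neg_right, neg_neg, hadj] at this
  have h1 := hsign k l (by rw [hadj]; norm_num)
  have h2 := hsign _ _ (by rw [hadj']; norm_num)
  rw [← hk]
  linear_combination (o k * o (bar k) * (o (bar k) * o (bar l) + 1) - o k * o (bar k)) * h1 -
    o k * o (bar k) * h2 - o l * o (bar l) * o (bar k) ^ 2 * hsq k - o l * o (bar l) * hsq (bar k)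

end Irreducible

section Schur

variable (R) in
noncomputable def rootOperator : V →ₗ[ℝ] V :=
  ∑ α ∈ R.roots, (innerₛₗ ℝ α).smulRight α

lemma rootOperator_apply (x : V) : R.rootOperator x = ∑ α ∈ R.roots, ⟪α, x⟫_ℝ • α := by
  simp [rootOperator]

lemma inner_rootOperator (x y : V) :
    ⟪R.rootOperator x, y⟫_ℝ = ∑ α ∈ R.roots, ⟪α, x⟫_ℝ * ⟪α, y⟫_ℝ := by
  simp [rootOperator_apply, sum_inner, real_inner_smul_left]

lemma isSymmetric_rootOperator : R.rootOperator.IsSymmetric := fun x y => by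
  rw [inner_rootOperator, real_inner_comm, inner_rootOperator]
  simp_rw [mul_comm]

variable [FiniteDimensional ℝ V]

lemma refl_rootOperator (hSL : R.IsSimplyLaced) (i : I) (x : V) :
    R.refl i (R.rootOperator x) = R.rootOperator (R.refl i x) := by
  have hroots : Set.MapsTo (R.refl i) R.roots R.roots := fun α hα => by
    simpa [refl_apply hSL] using reflect_mem_roots hSL (R.simple_mem i) hα
  rw [rootOperator_apply, rootOperator_apply, map_sum]
  refine sum_nbij' (R.refl i) (R.refl i) hroots hroots (fun α _ => refl_refl i α)
    (fun α _ => refl_refl i α) fun α _ => ?_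
  rw [map_smul, LinearIsometryEquiv.inner_map_map]

lemma simple_mem_of_inner_ne_zero (hSL : R.IsSimplyLaced) {E : Submodule ℝ V}
    (hE : ∀ v ∈ E, R.refl i v ∈ E) {v : V} (hv : v ∈ E) (h : ⟪v, R.simple i⟫_ℝ ≠ 0) :
    R.simple i ∈ E := by
  have hsub : v - R.refl i v = ⟪v, R.simple i⟫_ℝ • R.simple i := by
    rw [refl_apply hSL, reflect_apply, sub_sub_cancel]
  have := E.smul_mem (⟪v, R.simple i⟫_ℝ)⁻¹ (hsub ▸ E.sub_mem hv (hE v hv))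
  rwa [smul_smul, inv_mul_cancel₀ h, one_smul] at this

lemma eq_top_of_refl_mem (hSL : R.IsSimplyLaced) (hirr : R.IsIrreducible) {E : Submodule ℝ V}
    (hE : ∀ i, ∀ v ∈ E, R.refl i v ∈ E) (hbot : E ≠ ⊥) : E = ⊤ := by
  obtain ⟨v, hv, hv0⟩ := E.ne_bot_iff.mp hbot
  obtain ⟨i, hi⟩ : ∃ i, ⟪v, R.simple i⟫_ℝ ≠ 0 := by
    by_contra! h
    refine hv0 (inner_self_eq_zero (𝕜 := ℝ) |>.mp ?_)
    rw [← congrArg (inner ℝ v) (sum_coord_smul (R := R) v), inner_sum]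
    simp [real_inner_smul_right, h]
  have hall := hirr.forall_of_inner_ne_zero (p := fun j => R.simple j ∈ E)
    (fun j k hjk hj => simple_mem_of_inner_ne_zero hSL (hE k) hj hjk)
    (simple_mem_of_inner_ne_zero hSL (hE i) hv hi)
  rw [eq_top_iff, ← R.span_eq, Submodule.span_le]
  rintro _ ⟨j, rfl⟩
  exact hall j

lemma exists_rootOperator_eq_smul (hSL : R.IsSimplyLaced) (hirr : R.IsIrreducible)
    [Nonempty I] : ∃ μ : ℝ, R.rootOperator = μ • LinearMap.id := by
  have : Nontrivial V := ⟨R.simple (Classical.arbitrary I), 0,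
    fun h => R.zero_notMem (h ▸ R.simple_mem _)⟩
  obtain ⟨μ, hμ⟩ : ∃ μ : ℝ, Module.End.HasEigenvalue R.rootOperator μ :=
    ⟨_, isSymmetric_rootOperator.hasEigenvalue_iSup_of_finiteDimensional⟩
  refine ⟨μ, LinearMap.ext fun x => ?_⟩
  have htop := eq_top_of_refl_mem hSL hirr (E := Module.End.eigenspace R.rootOperator μ)
    (fun i v hv => by
      rw [Module.End.mem_eigenspace_iff] at hv ⊢
      rw [← refl_rootOperator hSL, hv, map_smul]) hμ
  exact Module.End.mem_eigenspace_iff.mp (htop ▸ Submodule.mem_top)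

lemma rootOperator_eq_smul (hSL : R.IsSimplyLaced) (hirr : R.IsIrreducible) {h : ℕ}
    (hcox : R.HasCoxeterNumber h) [Nonempty I] :
    R.rootOperator = (2 * h : ℝ) • LinearMap.id := by
  obtain ⟨μ, hμ⟩ := exists_rootOperator_eq_smul hSL hirr
  have htrace := congrArg (LinearMap.trace ℝ V) hμ
  simp only [rootOperator, map_sum, LinearMap.trace_smulRight, innerₛₗ_apply_apply, map_smul,
    LinearMap.trace_id, Module.finrank_eq_card_basis R.simpleBasis] at htrace
  rw [sum_congr rfl hSL, sum_const, hcox, nsmul_eq_mul, smul_eq_mul] at htrace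
  have hμ2 : μ = 2 * h := by
    refine mul_right_cancel₀ (Nat.cast_ne_zero.mpr Fintype.card_ne_zero :
      (Fintype.card I : ℝ) ≠ 0) ?_
    push_cast at htrace
    linarith
  rw [hμ, hμ2]

lemma sum_inner_mul_inner (hSL : R.IsSimplyLaced) (hirr : R.IsIrreducible) {h : ℕ}
    (hcox : R.HasCoxeterNumber h) [Nonempty I] (x y : V) :
    ∑ α ∈ R.roots, ⟪α, x⟫_ℝ * ⟪α, y⟫_ℝ = 2 * h * ⟪x, y⟫_ℝ := by
  rw [← inner_rootOperator, rootOperator_eq_smul hSL hirr hcox]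
  simp [real_inner_smul_left]

lemma sum_inner_simple_sq_erase (hSL : R.IsSimplyLaced) (hirr : R.IsIrreducible) {h : ℕ}
    (hcox : R.HasCoxeterNumber h) (i : I) :
    ∑ α ∈ R.posRoots.erase (R.simple i), ⟪α, R.simple i⟫_ℝ ^ 2 = 2 * h - 4 := by
  have : Nonempty I := ⟨i⟩
  have hschur := sum_inner_mul_inner hSL hirr hcox (R.simple i) (R.simple i)
  rw [sum_roots_eq_two_mul_sum_posRoots (f := fun α => ⟪α, R.simple i⟫_ℝ * ⟪α, R.simple i⟫_ℝ)
    (by simp), ← add_sum_erase _ _ (simple_mem_posRoots i), hSL _ (R.simple_mem i)] at hschur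
  simp only [sq]
  linarith

lemma card_posRootsInnerEqOne_add_two (hSL : R.IsSimplyLaced) (hirr : R.IsIrreducible) {h : ℕ}
    (hcox : R.HasCoxeterNumber h) (i : I) : #(R.posRootsInnerEqOne i) + 2 = h := by
  set P := R.posRoots.erase (R.simple i)
  have hfilter : R.posRootsInnerEqOne i = P.filter fun α => ⟪α, R.simple i⟫_ℝ = 1 := by
    ext α
    simp only [mem_posRootsInnerEqOne, P, mem_filter, mem_erase]
    refine ⟨fun ⟨hpos, h1⟩ => ⟨⟨?_, hpos⟩, h1⟩, fun h => ⟨h.1.2, h.2⟩⟩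
    rintro rfl
    rw [hSL _ (R.simple_mem i)] at h1
    norm_num at h1
  have hcard : (#(R.posRootsInnerEqOne i) : ℝ) =
      ∑ α ∈ P, (⟪α, R.simple i⟫_ℝ ^ 2 + ⟪α, R.simple i⟫_ℝ) / 2 := by
    rw [hfilter, card_filter, Nat.cast_sum]
    refine sum_congr rfl fun α hα => ?_
    obtain ⟨hne, hpos⟩ := mem_erase.mp hα
    rcases inner_eq_neg_one_or_zero_or_one hSL (mem_roots_of_mem_posRoots hpos) (R.simple_mem i)
      hne (fun h => neg_notMem_posRoots (simple_mem_posRoots (R := R) i) (h ▸ hpos))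
      with h | h | h <;> norm_num [h]
  have : (#(R.posRootsInnerEqOne i) : ℝ) + 2 = h := by
    rw [hcard, ← sum_div, sum_add_distrib, sum_inner_simple_sq_erase hSL hirr hcox,
      sum_inner_simple_erase hSL]
    ring
  exact_mod_cast this

end Schur

section LongestElement

variable [FiniteDimensional ℝ V]

lemma mul_self_eq_one_of_apply_simple (hSL : R.IsSimplyLaced) (hwW : w ∈ R.weylGroup)
    (hbar : ∀ i, w (R.simple i) = -R.simple (bar i)) : w * w = 1 :=
  eq_one_of_forall_apply_simple_mem_posRoots hSL (mul_mem hwW hwW) fun i => by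
    simpa [hbar] using simple_mem_posRoots (bar (bar i))

lemma apply_apply_of_apply_simple (hSL : R.IsSimplyLaced) (hwW : w ∈ R.weylGroup)
    (hbar : ∀ i, w (R.simple i) = -R.simple (bar i)) (x : V) : w (w x) = x := by
  simpa using congrArg (· x) (mul_self_eq_one_of_apply_simple hSL hwW hbar)

lemma bar_bar (hSL : R.IsSimplyLaced) (hwW : w ∈ R.weylGroup)
    (hbar : ∀ i, w (R.simple i) = -R.simple (bar i)) (i : I) : bar (bar i) = i :=
  R.simple_injective (by simpa [hbar] using apply_apply_of_apply_simple hSL hwW hbar (R.simple i))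

lemma inner_neg_apply_simple (hSL : R.IsSimplyLaced) (hwW : w ∈ R.weylGroup)
    (hbar : ∀ i, w (R.simple i) = -R.simple (bar i)) (x : V) (i : I) :
    ⟪-w x, R.simple i⟫_ℝ = ⟪x, R.simple (bar i)⟫_ℝ := by
  conv_lhs => rw [← apply_apply_of_apply_simple hSL hwW hbar (R.simple i)]
  rw [inner_neg_left, LinearIsometryEquiv.inner_map_map, hbar, inner_neg_right, neg_neg]

lemma exists_mem_posRoots_apply_eq_neg (hSL : R.IsSimplyLaced) (hwW : w ∈ R.weylGroup)
    (hbar : ∀ i, w (R.simple i) = -R.simple (bar i)) (i₀ : I) : ∃ α ∈ R.posRoots, w α = -α := by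
  have hne : w ≠ 1 := fun h => by
    have := hbar i₀
    rw [h, LinearIsometryEquiv.coe_one, id] at this
    exact neg_notMem_posRoots (simple_mem_posRoots (bar i₀)) (this ▸ simple_mem_posRoots i₀)
  obtain ⟨δ, hδ, hwδ⟩ := exists_apply_eq_neg_of_mul_self_eq_one hSL hwW
    (mul_self_eq_one_of_apply_simple hSL hwW hbar) hne
  rcases mem_posRoots_or_neg_mem hδ with hp | hp
  · exact ⟨δ, hp, hwδ⟩
  · exact ⟨-δ, hp, by rw [map_neg, hwδ]⟩

lemma exists_bar_eq_self_or_inner_eq_neg_one (hSL : R.IsSimplyLaced) (hwW : w ∈ R.weylGroup)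
    (hbar : ∀ i, w (R.simple i) = -R.simple (bar i)) (i₀ : I) :
    (∃ i, bar i = i) ∨ ∃ i, ⟪R.simple i, R.simple (bar i)⟫_ℝ = -1 := by
  by_contra! hcon
  obtain ⟨hfix, hedge⟩ := hcon
  have hF : (R.posRoots.filter fun α => w α = -α).Nonempty := by
    obtain ⟨α, hα, hwα⟩ := exists_mem_posRoots_apply_eq_neg hSL hwW hbar i₀
    exact ⟨α, mem_filter.mpr ⟨hα, hwα⟩⟩
  obtain ⟨α, hαF, hmin⟩ := exists_min_image _ R.height hF
  obtain ⟨hα, hwα⟩ := mem_filter.mp hαF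
  obtain ⟨k, hk⟩ := exists_inner_simple_pos hα
  have hbark : ⟪α, R.simple (bar k)⟫_ℝ = ⟪α, R.simple k⟫_ℝ := by
    rw [← inner_neg_apply_simple hSL hwW hbar, hwα, neg_neg]
  have hne : α ≠ R.simple k := by
    rintro rfl
    exact hfix k (R.simple_injective (neg_inj.mp (by rw [← hbar k, hwα])))
  have hone := inner_eq_one_of_pos hSL (mem_roots_of_mem_posRoots hα) (R.simple_mem k) hne hk
  have horth : ⟪R.simple k, R.simple (bar k)⟫_ℝ = 0 :=
    (inner_simple_eq_zero_or_neg_one hSL (Ne.symm (hfix k))).resolve_right (hedge k)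
  have hβ := sub_simple_mem_posRoots hSL (sub_simple_mem_posRoots hSL hα hone)
    (by rw [inner_sub_left, hbark, hone, horth, sub_zero])
  have hwβ : w (α - R.simple k - R.simple (bar k)) = -(α - R.simple k - R.simple (bar k)) := by
    rw [map_sub, map_sub, hwα, hbar, hbar, bar_bar hSL hwW hbar]
    abel
  have := hmin _ (mem_filter.mpr ⟨hβ, hwβ⟩)
  rw [map_sub, map_sub, height_simple, height_simple] at this
  linarith

lemma neg_apply_sub_simple_mem_posRootsInnerEqOne (hSL : R.IsSimplyLaced) (hwW : w ∈ R.weylGroup)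
    (hlong : ∀ α ∈ R.posRoots, w α ∈ R.negRoots) (hbar : ∀ i, w (R.simple i) = -R.simple (bar i))
    (hi : ⟪R.simple i, R.simple (bar i)⟫_ℝ = -1) (hα : α ∈ R.posRootsInnerEqOne i)
    (h0 : ⟪α, R.simple (bar i)⟫_ℝ = 0) :
    -w (α - R.simple i) ∈ R.posRootsInnerEqOne i ∧
      ⟪-w (α - R.simple i), R.simple (bar i)⟫_ℝ = -1 := by
  obtain ⟨hpos, h1⟩ := mem_posRootsInnerEqOne.mp hα
  refine ⟨mem_posRootsInnerEqOne.mpr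
    ⟨mem_negRoots.mp (hlong _ (sub_simple_mem_posRoots hSL hpos h1)), ?_⟩, ?_⟩
  · rw [inner_neg_apply_simple hSL hwW hbar, inner_sub_left, h0, hi]
    norm_num
  · rw [inner_neg_apply_simple hSL hwW hbar, bar_bar hSL hwW hbar, inner_sub_left, h1,
      hSL _ (R.simple_mem i)]
    norm_num

lemma simple_sub_apply_mem_posRootsInnerEqOne (hSL : R.IsSimplyLaced) (hwW : w ∈ R.weylGroup)
    (hlong : ∀ α ∈ R.posRoots, w α ∈ R.negRoots) (hbar : ∀ i, w (R.simple i) = -R.simple (bar i))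
    (hi : ⟪R.simple i, R.simple (bar i)⟫_ℝ = -1) (hα : α ∈ R.posRootsInnerEqOne i)
    (h1 : ⟪α, R.simple (bar i)⟫_ℝ = -1) :
    R.simple i - w α ∈ R.posRootsInnerEqOne i ∧ ⟪R.simple i - w α, R.simple (bar i)⟫_ℝ = 0 := by
  obtain ⟨hpos, hαi⟩ := mem_posRootsInnerEqOne.mp hα
  have hιi := inner_neg_apply_simple hSL hwW hbar α i
  have hιbar := inner_neg_apply_simple hSL hwW hbar α (bar i)
  rw [bar_bar hSL hwW hbar, hαi] at hιbar
  rw [h1] at hιi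
  rw [sub_eq_neg_add]
  refine ⟨mem_posRootsInnerEqOne.mpr
    ⟨add_simple_mem_posRoots hSL (mem_negRoots.mp (hlong α hpos)) hιi, ?_⟩, ?_⟩
  · rw [inner_add_left, hιi, hSL _ (R.simple_mem i)]
    norm_num
  · rw [inner_add_left, hιbar, hi]
    norm_num

/-- When `α_ī` is a neighbour of `α_i`, the involution `α ↦ -w (α - α_i)`, `α ↦ α_i - w α`
exchanges the roots with `⟪α, α_ī⟫ = 0` and those with `⟪α, α_ī⟫ = -1`. -/
lemma neg_one_pow_card_posRootsInnerEqOne_of_inner_bar (hSL : R.IsSimplyLaced)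
    (hwW : w ∈ R.weylGroup) (hlong : ∀ α ∈ R.posRoots, w α ∈ R.negRoots)
    (hbar : ∀ i, w (R.simple i) = -R.simple (bar i)) (hi : ⟪R.simple i, R.simple (bar i)⟫_ℝ = -1) :
    (-1 : ℤ) ^ #(R.posRootsInnerEqOne i) = -1 := by
  have hww := apply_apply_of_apply_simple hSL hwW hbar
  let ψ (α : V) : V :=
    if ⟪α, R.simple (bar i)⟫_ℝ = 0 then -w (α - R.simple i)
    else if ⟪α, R.simple (bar i)⟫_ℝ = -1 then R.simple i - w α else α
  have hψ {α : V} (hα : α ∈ R.posRootsInnerEqOne i) : ψ α ∈ R.posRootsInnerEqOne i ∧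
      ψ (ψ α) = α ∧ (ψ α = α ↔ ⟪α, R.simple (bar i)⟫_ℝ = 1) := by
    obtain ⟨hpos, hαi⟩ := mem_posRootsInnerEqOne.mp hα
    have hne : α ≠ R.simple (bar i) := by
      rintro rfl
      rw [real_inner_comm, hi] at hαi
      norm_num at hαi
    have hne' : α ≠ -R.simple (bar i) := fun h =>
      neg_notMem_posRoots (simple_mem_posRoots _) (h ▸ hpos)
    rcases inner_eq_neg_one_or_zero_or_one hSL (mem_roots_of_mem_posRoots hpos) (R.simple_mem _)
      hne hne' with h | h | h
    · obtain ⟨hmem, h0⟩ := simple_sub_apply_mem_posRootsInnerEqOne hSL hwW hlong hbar hi hα h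
      have hψα : ψ α = R.simple i - w α := (if_neg (by rw [h]; norm_num)).trans (if_pos h)
      refine ⟨hψα ▸ hmem, ?_, iff_of_false (fun heq => ?_) (by rw [h]; norm_num)⟩
      · rw [hψα, show ψ (R.simple i - w α) = -w (R.simple i - w α - R.simple i) from if_pos h0]
        simp [hww]
      · rw [← heq, hψα, h0] at h
        norm_num at h
    · obtain ⟨hmem, h1⟩ := neg_apply_sub_simple_mem_posRootsInnerEqOne hSL hwW hlong hbar hi hα h
      have hψα : ψ α = -w (α - R.simple i) := if_pos h
      refine ⟨hψα ▸ hmem, ?_, iff_of_false (fun heq => ?_) (by rw [h]; norm_num)⟩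
      · rw [hψα, show ψ (-w (α - R.simple i)) = R.simple i - w (-w (α - R.simple i)) from
          (if_neg (by rw [h1]; norm_num)).trans (if_pos h1)]
        simp [hww]
      · rw [← heq, hψα, h1] at h
        norm_num at h
    · have hψα : ψ α = α := by norm_num [ψ, h]
      exact ⟨by rwa [hψα], by rw [hψα, hψα], iff_of_true hψα h⟩
  rw [Finset.neg_one_pow_card_eq_of_involution ψ (fun α hα => (hψ hα).1)
    (fun α hα => (hψ hα).2.1), filter_congr fun α hα => (hψ hα).2.2,
    filter_posRootsInnerEqOne_inner_eq_one hSL hi, card_singleton, pow_one]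

lemma neg_one_pow_card_posRootsInnerEqOne_eq_filter (hSL : R.IsSimplyLaced)
    (hwW : w ∈ R.weylGroup) (hlong : ∀ α ∈ R.posRoots, w α ∈ R.negRoots)
    (hbar : ∀ i, w (R.simple i) = -R.simple (bar i)) (hi : bar i = i) :
    (-1 : ℤ) ^ #(R.posRootsInnerEqOne i) =
      (-1) ^ #((R.posRootsInnerEqOne i).filter fun α => w α = -α) := by
  rw [Finset.neg_one_pow_card_eq_of_involution (fun α => -w α)]
  · simp_rw [neg_eq_iff_eq_neg]
  · intro α hα
    obtain ⟨hpos, h1⟩ := mem_posRootsInnerEqOne.mp hα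
    exact mem_posRootsInnerEqOne.mpr ⟨mem_negRoots.mp (hlong α hpos),
      by rw [inner_neg_apply_simple hSL hwW hbar, hi, h1]⟩
  · intro α _
    simp [apply_apply_of_apply_simple hSL hwW hbar]

lemma neg_one_pow_card_posRootsInnerEqOne_of_bar_eq_self (hSL : R.IsSimplyLaced)
    (hwW : w ∈ R.weylGroup) (hlong : ∀ α ∈ R.posRoots, w α ∈ R.negRoots)
    (hbar : ∀ i, w (R.simple i) = -R.simple (bar i)) (hi : bar i = i) :
    (-1 : ℤ) ^ #(R.posRootsInnerEqOne i) = 1 := by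
  have hws : w (R.simple i) = -R.simple i := by rw [hbar, hi]
  obtain ⟨G, hsG, hG, horth, hw⟩ := exists_pairwise_orthogonal_eq_sub_sum hSL hwW
    (mul_self_eq_one_of_apply_simple hSL hwW hbar) (R.simple_mem i) hws
  have hG' : ∀ γ ∈ G.erase (R.simple i), γ ∈ R.roots ∧ w γ = -γ ∧ ⟪γ, R.simple i⟫_ℝ = 0 :=
    fun γ hγ => ⟨(hG γ (mem_of_mem_erase hγ)).1, (hG γ (mem_of_mem_erase hγ)).2,
      horth (mem_of_mem_erase hγ) hsG (ne_of_mem_erase hγ)⟩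
  rw [neg_one_pow_card_posRootsInnerEqOne_eq_filter hSL hwW hlong hbar hi,
    neg_one_pow_card_filter_forall_inner_eq_zero hSL hws (G.erase (R.simple i)) hG'
      (horth.mono (coe_subset.mpr (erase_subset _ G))), filter_false_of_mem, card_empty, pow_zero]
  rintro α hα ⟨hwα, hαG⟩
  obtain ⟨hpos, h1⟩ := mem_posRootsInnerEqOne.mp hα
  -- `w α = α - α_i` and `w α = -α` are incompatible for a root `α`.
  have hsum : ∑ γ ∈ G, ⟪α, γ⟫_ℝ • γ = R.simple i := by
    rw [sum_eq_single (R.simple i)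
      (fun γ hγ hne => by rw [hαG γ (mem_erase.mpr ⟨hne, hγ⟩), zero_smul]) (fun h => absurd hsG h),
      h1, one_smul]
  have := congrArg (fun x => ⟪x, α⟫_ℝ) (hwα.symm.trans (hw α))
  simp only [hsum, inner_neg_left, inner_sub_left, real_inner_comm α (R.simple i), h1,
    hSL α (mem_roots_of_mem_posRoots hpos)] at this
  norm_num at this

end LongestElement

end RootSystemData

open RootSystemData in
/-- if `o : I → {±1}` satisfies `o_i o_j = −1` whenever `a_ij < 0`, and `ī` is
defined by `w₀(α_i) = −α_ī` for the longest element `w₀`, then `o_i o_ī = (−1)^h`. -/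
theorem stmt5 {V : Type*} [NormedAddCommGroup V] [InnerProductSpace ℝ V] [FiniteDimensional ℝ V]
    {I : Type*} [Fintype I] (R : RootSystemData V I)
    (hSL : R.IsSimplyLaced) (hirr : R.IsIrreducible)
    (h : ℕ) (hcox : R.HasCoxeterNumber h)
    (w : V ≃ₗᵢ[ℝ] V) (hwW : w ∈ R.weylGroup)
    (hlong : ∀ α ∈ R.posRoots, w α ∈ R.negRoots)
    (bar : I → I) (hbar : ∀ i, w (R.simple i) = -(R.simple (bar i)))
    (o : I → ℤ) (ho : ∀ i, o i = 1 ∨ o i = -1)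
    (hsign : ∀ i j, ⟪R.simple i, R.simple j⟫_ℝ < 0 → o i * o j = -1) :
    ∀ i, o i * o (bar i) = (-1) ^ h := by
  intro i
  have hcard (j : I) := card_posRootsInnerEqOne_add_two hSL hirr hcox j
  rcases exists_bar_eq_self_or_inner_eq_neg_one hSL hwW hbar i with ⟨j, hj⟩ | ⟨j, hj⟩
  · rw [mul_bar_eq_mul_bar hSL hirr hbar ho hsign i j, hj, ← hcard j, pow_add,
      neg_one_pow_card_posRootsInnerEqOne_of_bar_eq_self hSL hwW hlong hbar hj]
    rcases ho j with h' | h' <;> simp [h']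
  · rw [mul_bar_eq_mul_bar hSL hirr hbar ho hsign i j, hsign j (bar j) (by rw [hj]; norm_num),
      ← hcard j, pow_add, neg_one_pow_card_posRootsInnerEqOne_of_inner_bar hSL hwW hlong hbar hj]
    norm_num
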